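/- Let β, N₀, κ, B, P > 0 and μ, D₀, ν, η ≥ 0 be real numbers with D₀ + νB > 0. The function M ↦ B·log₂(1 + MPβ/(BN₀)) / (P/κ + μ + (D₀ + νB)M + ηB·log₂(1 + MPβ/(BN₀))) on the domain M > 0 attains its maximum at the unique point M* = B N₀ (e^w − 1)/(Pβ), where w is the unique positive real number satisfying (w − 1)e^w = Pβ(P/κ + μ)/(B N₀ (D₀ + νB)) − 1. -/

import Mathlib

/-- The energy efficiency as a function of the (real-valued) number of antennas `M`, for a
fixed transmit power `P` and bandwidth `B`. -/
noncomputable def EE10 (β N₀ κ B P μ D₀ ν η M : ℝ) : ℝ :=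
  B * Real.logb 2 (1 + M * P * β / (B * N₀)) /
    (P / κ + μ + (D₀ + ν * B) * M +
      η * B * Real.logb 2 (1 + M * P * β / (B * N₀)))

/-!
Write `u = 1 + M P β / (B N₀)`, `a = P/κ + μ` and `d = D₀ + νB`. Since
`1 / EE = (a + dM) / (B log₂ u) + η`, maximising `EE` amounts to maximising `log u / (a + dM)`,
and the defining equation of `w` turns `a + dM` into a positive multiple of `(w - 1) e^w + u`.
So the claim is that `log u / ((w - 1) e^w + u) ≤ e^{-w}` with equality only at `u = e^w`,
which is the tangent-line inequality for the concave function `log` at `e^w`.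
-/

open Real

lemma log_mul_exp_lt {w u : ℝ} (hu : 0 < u) (hne : u ≠ exp w) :
    log u * exp w < (w - 1) * exp w + u := by
  have hlog : log u - w ≠ 0 := fun h => hne <| by rw [← exp_log hu, sub_eq_zero.mp h]
  have h := add_one_lt_exp hlog
  rw [exp_sub, exp_log hu, lt_div_iff₀ (exp_pos w)] at h
  linear_combination h

section RatioComparison

variable {α : Type*} [Field α] [LinearOrder α] [IsStrictOrderedRing α] {B η x y s t : α}

lemma mul_div_add_lt_mul_div_add_iff (hB : 0 < B) (hs : 0 < s + η * B * x)
    (ht : 0 < t + η * B * y) :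
    B * x / (s + η * B * x) < B * y / (t + η * B * y) ↔ x * t < y * s := by
  rw [div_lt_div_iff₀ hs ht,
    show B * x * (t + η * B * y) = B * (x * t) + η * B * B * (x * y) by ring,
    show B * y * (s + η * B * x) = B * (y * s) + η * B * B * (x * y) by ring,
    add_lt_add_iff_right, mul_lt_mul_iff_right₀ hB]

end RatioComparison

section Efficiency

noncomputable def efficiency (B η a d c M : ℝ) : ℝ :=
  B * logb 2 (1 + c * M) / (a + d * M + η * B * logb 2 (1 + c * M))

lemma EE10_eq_efficiency (β N₀ κ B P μ D₀ ν η M : ℝ) :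
    EE10 β N₀ κ B P μ D₀ ν η M =
      efficiency B η (P / κ + μ) (D₀ + ν * B) (P * β / (B * N₀)) M := by
  rw [EE10, efficiency, show M * P * β / (B * N₀) = P * β / (B * N₀) * M by ring]

variable {a c d w M M' : ℝ}

lemma add_mul_pos_of_mul_eq (hc : 0 < c) (hd : 0 < d) (hw : 0 < w)
    (ha : c * a = d * ((w - 1) * exp w + 1)) (hM : 0 < M) : 0 < a + d * M := by
  have hw1 : 0 < (w - 1) * exp w + 1 := by
    simpa using log_mul_exp_lt one_pos (one_lt_exp_iff.mpr hw).ne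
  have h : c * (a + d * M) = d * ((w - 1) * exp w + 1 + c * M) := by linear_combination ha
  exact (mul_pos_iff_of_pos_left hc).mp (h ▸ by positivity)

lemma log_one_add_mul_mul_lt (hc : 0 < c) (hd : 0 < d) (hw : 0 < w)
    (ha : c * a = d * ((w - 1) * exp w + 1)) (hM' : c * M' = exp w - 1)
    (hM : 0 < 1 + c * M) (hne : M ≠ M') :
    log (1 + c * M) * (a + d * M') < w * (a + d * M) := by
  have hu : 1 + c * M ≠ exp w := fun h =>
    hne <| mul_left_cancel₀ hc.ne' (by linear_combination h - hM')
  rw [← mul_lt_mul_iff_right₀ hc]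
  calc c * (log (1 + c * M) * (a + d * M'))
      = d * w * (log (1 + c * M) * exp w) := by
        linear_combination log (1 + c * M) * (ha + d * hM')
    _ < d * w * ((w - 1) * exp w + (1 + c * M)) := by gcongr; exact log_mul_exp_lt hM hu
    _ = c * (w * (a + d * M)) := by linear_combination -w * ha

lemma efficiency_lt {B η : ℝ} (hB : 0 < B) (hη : 0 ≤ η) (hc : 0 < c) (hd : 0 < d)
    (hw : 0 < w) (ha : c * a = d * ((w - 1) * exp w + 1)) (hM' : c * M' = exp w - 1) (hM : 0 < M)
    (hne : M ≠ M') : efficiency B η a d c M < efficiency B η a d c M' := by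
  have hden : ∀ {M}, 0 < M → 0 < a + d * M + η * B * logb 2 (1 + c * M) := fun hM =>
    add_pos_of_pos_of_nonneg (add_mul_pos_of_mul_eq hc hd hw ha hM)
      (mul_nonneg (by positivity) (logb_nonneg one_lt_two (le_add_of_nonneg_right (by positivity))))
  have hM'_pos : 0 < M' :=
    (mul_pos_iff_of_pos_left hc).mp (hM' ▸ sub_pos.mpr (one_lt_exp_iff.mpr hw))
  rw [efficiency, efficiency, mul_div_add_lt_mul_div_add_iff hB (hden hM) (hden hM'_pos), hM',
    add_sub_cancel, logb, logb, log_exp, div_mul_eq_mul_div, div_mul_eq_mul_div,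
    div_lt_div_iff_of_pos_right (log_pos one_lt_two)]
  exact log_one_add_mul_mul_lt hc hd hw ha hM' (by positivity) hne

end Efficiency

theorem stmt_10_general (β N₀ κ B P μ D₀ ν η w : ℝ)
    (hβ : 0 < β) (hN : 0 < N₀) (hB : 0 < B) (hP : 0 < P) (hη : 0 ≤ η)
    (hDB : 0 < D₀ + ν * B) (hw : 0 < w)
    (hwe : (w - 1) * Real.exp w =
      P * β * (P / κ + μ) / (B * N₀ * (D₀ + ν * B)) - 1) :
    ∀ M : ℝ, 0 < M →
      EE10 β N₀ κ B P μ D₀ ν η M ≤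
        EE10 β N₀ κ B P μ D₀ ν η (B * N₀ * (Real.exp w - 1) / (P * β)) ∧
      (EE10 β N₀ κ B P μ D₀ ν η M =
          EE10 β N₀ κ B P μ D₀ ν η (B * N₀ * (Real.exp w - 1) / (P * β)) →
        M = B * N₀ * (Real.exp w - 1) / (P * β)) := by
  intro M hM
  set M' := B * N₀ * (exp w - 1) / (P * β)
  have hc : 0 < P * β / (B * N₀) := by positivity
  have ha : P * β / (B * N₀) * (P / κ + μ) = (D₀ + ν * B) * ((w - 1) * exp w + 1) := by
    rw [hwe, sub_add_cancel, mul_comm (B * N₀), mul_div_assoc', mul_div_mul_left _ _ hDB.ne',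
      div_mul_eq_mul_div]
  have hM' : P * β / (B * N₀) * M' = exp w - 1 := by simp only [M']; field_simp
  have hlt : ∀ {M}, 0 < M → M ≠ M' →
      EE10 β N₀ κ B P μ D₀ ν η M < EE10 β N₀ κ B P μ D₀ ν η M' := fun hM hne => by
    simpa only [EE10_eq_efficiency] using efficiency_lt hB hη hc hDB hw ha hM' hM hne
  refine ⟨?_, fun heq => by_contra fun hne => (hlt hM hne).ne heq⟩
  rcases eq_or_ne M M' with rfl | hne
  exacts [le_rfl, (hlt hM hne).le]

/-- Lemma 3 of the paper: for given `B, P`, the energy efficiency on `M > 0` attains its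
maximum at the unique point `M* = B N₀ (e^w - 1)/(P β)`, where `w > 0` satisfies
`(w - 1) e^w = P β (P/κ + μ)/(B N₀ (D₀ + νB)) - 1`. -/
theorem stmt_10 (β N₀ κ B P μ D₀ ν η w : ℝ)
    (hβ : 0 < β) (hN : 0 < N₀) (hκ : 0 < κ) (hB : 0 < B) (hP : 0 < P)
    (hμ : 0 ≤ μ) (hD : 0 ≤ D₀) (hν : 0 ≤ ν) (hη : 0 ≤ η)
    (hDB : 0 < D₀ + ν * B) (hw : 0 < w)
    (hwe : (w - 1) * Real.exp w =
      P * β * (P / κ + μ) / (B * N₀ * (D₀ + ν * B)) - 1) :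
    ∀ M : ℝ, 0 < M →
      EE10 β N₀ κ B P μ D₀ ν η M ≤
        EE10 β N₀ κ B P μ D₀ ν η (B * N₀ * (Real.exp w - 1) / (P * β)) ∧
      (EE10 β N₀ κ B P μ D₀ ν η M =
          EE10 β N₀ κ B P μ D₀ ν η (B * N₀ * (Real.exp w - 1) / (P * β)) →
        M = B * N₀ * (Real.exp w - 1) / (P * β)) :=
  stmt_10_general β N₀ κ B P μ D₀ ν η w hβ hN hB hP hη hDB hw hwe
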